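/- arXiv:math/0703654 — 5 statements merged into one kernel-verified Lean document; each statement's English description precedes it below -/
import Mathlib

section
/- Let {P_t} be a stochastically continuous Markov semigroup on C_b(H) with generator (K, D(K)). Then K is π-closed: if φ_n ∈ D(K), φ_n → φ pointwise with sup_n ‖φ_n‖_∞ < ∞, and Kφ_n → g pointwise with sup_n ‖Kφ_n‖_∞ < ∞, for some φ, g ∈ C_b(H), then φ ∈ D(K) and Kφ = g. -/
open MeasureTheory Filter Topology

variable {H : Type*} [NormedAddCommGroup H] [InnerProductSpace ℝ H] [CompleteSpace H]
  [TopologicalSpace.SeparableSpace H] [MeasurableSpace H] [BorelSpace H]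

/-- The Markov semigroup `P_t φ(x) = ∫ φ(y) π_t(x, dy)` associated to transition
kernels `π`. -/
noncomputable def Pt (π : ℝ → H → Measure H) (t : ℝ) (φ : H → ℝ) (x : H) : ℝ :=
  ∫ y, φ y ∂(π t x)

/-- Membership `φ ∈ D(K)` with `K φ = g`, for the infinitesimal generator `(K, D(K))`
of the semigroup `P_t`: `φ, g` are bounded and uniformly continuous,
`(P_t φ(x) - φ(x))/t → g(x)` pointwise as `t → 0⁺`, and the difference quotients are
uniformly bounded for `t ∈ (0,1)`. -/
def MemDomK (π : ℝ → H → Measure H) (φ g : H → ℝ) : Prop :=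
  UniformContinuous φ ∧ (∃ C, ∀ x, |φ x| ≤ C) ∧
  UniformContinuous g ∧ (∃ C, ∀ x, |g x| ≤ C) ∧
  (∀ x, Tendsto (fun t => (Pt π t φ x - φ x) / t) (𝓝[>] (0:ℝ)) (𝓝 (g x))) ∧
  (∃ C, ∀ t ∈ Set.Ioo (0:ℝ) 1, ∀ x, |Pt π t φ x - φ x| / t ≤ C)

/-- Hypotheses making `π` the kernels of a stochastically continuous Markov semigroup. -/
def IsMarkovSemigroup (π : ℝ → H → Measure H) : Prop :=
  (∀ t x, IsProbabilityMeasure (π t x)) ∧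
  (∀ Γ : Set H, MeasurableSet Γ → Measurable (fun p : ℝ × H => π p.1 p.2 Γ)) ∧
  (∀ t s : ℝ, 0 ≤ t → 0 ≤ s → ∀ x, ∀ Γ : Set H, MeasurableSet Γ →
    π (t + s) x Γ = ∫⁻ y, π s y Γ ∂(π t x)) ∧
  (∀ x, π 0 x = Measure.dirac x) ∧
  (∀ φ : H → ℝ, UniformContinuous φ → (∃ C, ∀ x, |φ x| ≤ C) →
    ∀ x, ContinuousOn (fun t => Pt π t φ x) (Set.Ici 0))

/-! For `φ ∈ D(K)` with `Kφ = g`, the semigroup property and dominated convergence show that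
`t ↦ P_t φ(x)` has right derivative `P_t g(x)`, hence `P_t φ - φ = ∫₀ᵗ P_s g ds`. This integrated
identity passes to bounded pointwise limits by dominated convergence, and conversely it yields
both `(P_t φ - φ)/t → g` and the bound `|P_t φ - φ|/t ≤ sup |g|`. -/

set_option linter.unusedSectionVars false

open ProbabilityTheory Set

lemma hasDerivWithinAt_Ioi_iff_tendsto_slope_zero {f : ℝ → ℝ} {f' x : ℝ} :
    HasDerivWithinAt f f' (Ioi x) x ↔
      Tendsto (fun h => (f (x + h) - f x) / h) (𝓝[>] 0) (𝓝 f') := by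
  rw [hasDerivWithinAt_iff_tendsto_slope' self_notMem_Ioi, ← add_zero x,
    ← Filter.map_add_left_nhdsGT, tendsto_map'_iff, add_zero]
  simp only [Function.comp_def, slope_def_field, add_sub_cancel_left]

lemma integrable_of_forall_abs_le {α : Type*} [MeasurableSpace α] {μ : Measure α}
    [IsFiniteMeasure μ] {f : α → ℝ} {C : ℝ} (hf : Measurable f) (hC : ∀ x, |f x| ≤ C) :
    Integrable f μ :=
  .of_bound hf.aestronglyMeasurable C (ae_of_all _ hC)

namespace IsMarkovSemigroup

variable {π : ℝ → H → Measure H}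

noncomputable def transitionKernel (hπ : IsMarkovSemigroup π) : Kernel (ℝ × H) H where
  toFun p := π p.1 p.2
  measurable' := Measure.measurable_of_measurable_coe _ hπ.2.1

instance isMarkovKernel_transitionKernel (hπ : IsMarkovSemigroup π) :
    IsMarkovKernel hπ.transitionKernel :=
  ⟨fun p => hπ.1 p.1 p.2⟩

noncomputable def kernel (hπ : IsMarkovSemigroup π) (t : ℝ) : Kernel H H :=
  hπ.transitionKernel.comap (t, ·) measurable_prodMk_left

instance isMarkovKernel_kernel (hπ : IsMarkovSemigroup π) (t : ℝ) :
    IsMarkovKernel (hπ.kernel t) :=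
  Kernel.IsMarkovKernel.comap _ _

lemma kernel_add (hπ : IsMarkovSemigroup π) {t s : ℝ} (ht : 0 ≤ t) (hs : 0 ≤ s) :
    hπ.kernel (t + s) = hπ.kernel s ∘ₖ hπ.kernel t := by
  ext x Γ hΓ
  rw [Kernel.comp_apply' _ _ _ hΓ]
  exact hπ.2.2.1 t s ht hs x Γ hΓ

lemma measurable_Pt_uncurry (hπ : IsMarkovSemigroup π) {φ : H → ℝ} (hφ : Measurable φ) :
    Measurable fun p : ℝ × H => Pt π p.1 φ p.2 :=
  (hφ.stronglyMeasurable.integral_kernel (κ := hπ.transitionKernel)).measurable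

lemma measurable_Pt (hπ : IsMarkovSemigroup π) {φ : H → ℝ} (hφ : Measurable φ) (t : ℝ) :
    Measurable (Pt π t φ) :=
  (hπ.measurable_Pt_uncurry hφ).comp (measurable_const.prodMk measurable_id)

lemma abs_Pt_le (hπ : IsMarkovSemigroup π) {φ : H → ℝ} {C : ℝ} (hC : ∀ x, |φ x| ≤ C)
    (t : ℝ) (x : H) : |Pt π t φ x| ≤ C := by
  have := hπ.1 t x
  simpa [Pt] using norm_integral_le_of_norm_le_const (μ := π t x) (f := φ) (ae_of_all _ hC)

lemma Pt_zero (hπ : IsMarkovSemigroup π) {φ : H → ℝ} (hφ : Measurable φ) (x : H) :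
    Pt π 0 φ x = φ x := by
  rw [Pt, hπ.2.2.2.1, integral_dirac' _ _ hφ.stronglyMeasurable]

lemma Pt_add (hπ : IsMarkovSemigroup π) {φ : H → ℝ} {C : ℝ} (hφ : Measurable φ)
    (hC : ∀ x, |φ x| ≤ C) {t s : ℝ} (ht : 0 ≤ t) (hs : 0 ≤ s) (x : H) :
    Pt π (t + s) φ x = ∫ y, Pt π s φ y ∂π t x := by
  change ∫ z, φ z ∂hπ.kernel (t + s) x = ∫ y, ∫ z, φ z ∂hπ.kernel s y ∂hπ.kernel t x
  rw [hπ.kernel_add ht hs]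
  exact Kernel.integral_comp (integrable_of_forall_abs_le hφ hC)

lemma continuousOn_Pt (hπ : IsMarkovSemigroup π) {φ : H → ℝ} (hφ : UniformContinuous φ)
    (hφb : ∃ C, ∀ x, |φ x| ≤ C) (x : H) : ContinuousOn (fun t => Pt π t φ x) (Ici 0) :=
  hπ.2.2.2.2 φ hφ hφb x

lemma tendsto_Pt (hπ : IsMarkovSemigroup π) {ι : Type*} {l : Filter ι} [l.IsCountablyGenerated]
    {φs : ι → H → ℝ} {φ : H → ℝ} {C : ℝ} (hφs : ∀ i, Measurable (φs i))
    (hC : ∀ i x, |φs i x| ≤ C) (hlim : ∀ x, Tendsto (fun i => φs i x) l (𝓝 (φ x)))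
    (t : ℝ) (x : H) : Tendsto (fun i => Pt π t (φs i) x) l (𝓝 (Pt π t φ x)) := by
  have := hπ.1 t x
  exact tendsto_integral_filter_of_dominated_convergence (fun _ => C)
    (.of_forall fun i => (hφs i).aestronglyMeasurable) (.of_forall fun i => ae_of_all _ (hC i))
    (integrable_const C) (ae_of_all _ hlim)

lemma tendsto_intervalIntegral_Pt (hπ : IsMarkovSemigroup π) {ι : Type*} {l : Filter ι}
    [l.IsCountablyGenerated] {φs : ι → H → ℝ} {φ : H → ℝ} {C : ℝ}
    (hφs : ∀ i, Measurable (φs i)) (hC : ∀ i x, |φs i x| ≤ C)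
    (hlim : ∀ x, Tendsto (fun i => φs i x) l (𝓝 (φ x))) (a b : ℝ) (x : H) :
    Tendsto (fun i => ∫ s in a..b, Pt π s (φs i) x) l (𝓝 (∫ s in a..b, Pt π s φ x)) :=
  intervalIntegral.tendsto_integral_filter_of_dominated_convergence (fun _ => C)
    (.of_forall fun i => ((hπ.measurable_Pt_uncurry (hφs i)).comp
      (measurable_id.prodMk measurable_const)).aestronglyMeasurable)
    (.of_forall fun i => ae_of_all _ fun s _ => hπ.abs_Pt_le (hC i) s x)
    intervalIntegrable_const (ae_of_all _ fun s _ => hπ.tendsto_Pt hφs hC hlim s x)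

end IsMarkovSemigroup

namespace MemDomK

variable {π : ℝ → H → Measure H} {φ g : H → ℝ}

lemma hasDerivWithinAt_Pt (hd : MemDomK π φ g) (hπ : IsMarkovSemigroup π) (x : H) {s : ℝ}
    (hs : 0 ≤ s) : HasDerivWithinAt (fun u => Pt π u φ x) (Pt π s g x) (Ioi s) s := by
  obtain ⟨hφ, ⟨Cφ, hCφ⟩, -, -, hlim, ⟨Cq, hCq⟩⟩ := hd
  have hφm := hφ.continuous.measurable
  have := hπ.1 s x
  -- Chapman–Kolmogorov: the difference quotient at `s` is the `π s x`-average of the one at `0`.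
  have hquot : ∀ h > 0, ∫ y, (Pt π h φ y - φ y) / h ∂π s x
      = (Pt π (s + h) φ x - Pt π s φ x) / h := fun h hh => by
    rw [hπ.Pt_add hφm hCφ hs hh.le, integral_div, integral_sub
      (integrable_of_forall_abs_le (hπ.measurable_Pt hφm h)
        (hπ.abs_Pt_le hCφ h)) (integrable_of_forall_abs_le hφm hCφ)]
    rfl
  rw [hasDerivWithinAt_Ioi_iff_tendsto_slope_zero]
  refine Tendsto.congr' (eventually_nhdsWithin_of_forall hquot) ?_
  refine tendsto_integral_filter_of_dominated_convergence (fun _ => Cq) ?_ ?_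
    (integrable_const Cq) (ae_of_all _ hlim)
  · exact .of_forall fun h =>
      (((hπ.measurable_Pt hφm h).sub hφm).div_const h).aestronglyMeasurable
  · filter_upwards [Ioo_mem_nhdsGT zero_lt_one] with h hh
    refine ae_of_all _ fun y => ?_
    simpa [abs_div, abs_of_pos hh.1] using hCq h hh y

lemma Pt_sub_eq_integral (hd : MemDomK π φ g) (hπ : IsMarkovSemigroup π) (x : H) {t : ℝ}
    (ht : 0 ≤ t) : Pt π t φ x - φ x = ∫ s in (0 : ℝ)..t, Pt π s g x := by
  have ⟨hφ, hφb, hg, hgb, _⟩ := hd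
  have hGint : IntervalIntegrable (fun s => Pt π s g x) volume 0 t :=
    ((hπ.continuousOn_Pt hg hgb x).mono (uIcc_of_le ht ▸ Icc_subset_Ici_self)).intervalIntegrable
  rw [intervalIntegral.integral_eq_sub_of_hasDeriv_right_of_le ht
    ((hπ.continuousOn_Pt hφ hφb x).mono Icc_subset_Ici_self)
    (fun s hs => hd.hasDerivWithinAt_Pt hπ x hs.1.le) hGint, hπ.Pt_zero hφ.continuous.measurable]

lemma of_Pt_sub_eq_integral (hπ : IsMarkovSemigroup π) (hφ : UniformContinuous φ)
    (hφb : ∃ C, ∀ x, |φ x| ≤ C) (hg : UniformContinuous g) (hgb : ∃ C, ∀ x, |g x| ≤ C)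
    (hint : ∀ x, ∀ t > 0, Pt π t φ x - φ x = ∫ s in (0 : ℝ)..t, Pt π s g x) :
    MemDomK π φ g := by
  obtain ⟨Cg, hCg⟩ := hgb
  refine ⟨hφ, hφb, hg, ⟨Cg, hCg⟩, fun x => ?_, ⟨Cg, fun t ht x => ?_⟩⟩
  · have hG := hπ.continuousOn_Pt hg ⟨Cg, hCg⟩ x
    have hderiv : HasDerivWithinAt (fun u => ∫ s in (0 : ℝ)..u, Pt π s g x) (Pt π 0 g x)
        (Ioi 0) 0 :=
      (intervalIntegral.integral_hasDerivWithinAt_right (s := Ici 0) (t := Ioi 0) .refl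
        ⟨Ioi 0, self_mem_nhdsWithin, (hG.mono Ioi_subset_Ici_self).aestronglyMeasurable
          measurableSet_Ioi⟩
        ((hG 0 self_mem_Ici).mono Ioi_subset_Ici_self)).mono Ioi_subset_Ici_self
    rw [hπ.Pt_zero hg.continuous.measurable, hasDerivWithinAt_Ioi_iff_tendsto_slope_zero]
      at hderiv
    refine hderiv.congr' (eventually_nhdsWithin_of_forall fun t ht => ?_)
    simp only [zero_add, intervalIntegral.integral_same, sub_zero, hint x t ht]
  · rw [hint x t ht.1, div_le_iff₀ ht.1]
    simpa [abs_of_pos ht.1] using intervalIntegral.norm_integral_le_of_norm_le_const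
      (a := 0) (b := t) fun s _ => (Real.norm_eq_abs _).trans_le (hπ.abs_Pt_le hCg s x)

end MemDomK

/-- the generator `K` is π-closed: if `φ_n ∈ D(K)`, `φ_n → φ` pointwise
with uniformly bounded sup norms, and `K φ_n → g` pointwise with uniformly bounded sup
norms, where `φ, g ∈ C_b(H)`, then `φ ∈ D(K)` and `K φ = g`. -/
theorem generator_pi_closed
    (π : ℝ → H → Measure H) (hMarkov : IsMarkovSemigroup π)
    (φseq gseq : ℕ → H → ℝ) (φ g : H → ℝ)
    (hdom : ∀ n, MemDomK π (φseq n) (gseq n))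
    (hφptw : ∀ x, Tendsto (fun n => φseq n x) atTop (𝓝 (φ x)))
    (hφbdd : ∃ C, ∀ n x, |φseq n x| ≤ C)
    (hgptw : ∀ x, Tendsto (fun n => gseq n x) atTop (𝓝 (g x)))
    (hgbdd : ∃ C, ∀ n x, |gseq n x| ≤ C)
    (hφ : UniformContinuous φ) (hφb : ∃ C, ∀ x, |φ x| ≤ C)
    (hg : UniformContinuous g) (hgb : ∃ C, ∀ x, |g x| ≤ C) :
    MemDomK π φ g := by
  obtain ⟨Cφ, hCφ⟩ := hφbdd
  obtain ⟨Cg, hCg⟩ := hgbdd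
  refine MemDomK.of_Pt_sub_eq_integral hMarkov hφ hφb hg hgb fun x t ht => ?_
  have hlhs := (hMarkov.tendsto_Pt (fun n => (hdom n).1.continuous.measurable) hCφ hφptw t x).sub
    (hφptw x)
  have hrhs := hMarkov.tendsto_intervalIntegral_Pt
    (fun n => (hdom n).2.2.1.continuous.measurable) hCg hgptw 0 t x
  refine tendsto_nhds_unique hlhs (hrhs.congr fun n => ?_)
  exact ((hdom n).Pt_sub_eq_integral hMarkov x ht.le).symm
end

section
/- The linear span of real and imaginary parts of the functions x ↦ e^{i⟨x,h⟩}, h ∈ H, is π-dense in C_b(H): for every uniformly continuous bounded φ : H → ℝ there exists a two-indexed sequence of trigonometric polynomials φ_{n_1,n_2} with lim_{n_1} lim_{n_2} φ_{n_1,n_2}(x) = φ(x) for all x and sup_{n_1,n_2} ‖φ_{n_1,n_2}‖_∞ ≤ ‖φ‖_∞. -/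
open Filter Topology
open scoped RealInnerProductSpace

/-- A real trigonometric polynomial on a Hilbert space: an element of the linear span
of real and imaginary parts of `x ↦ e^{i⟪x,h⟫}`, `h ∈ H`. -/
def IsTrigPoly {H : Type*} [NormedAddCommGroup H] [InnerProductSpace ℝ H]
    (f : H → ℝ) : Prop :=
  ∃ (N : ℕ) (a b : Fin N → ℝ) (h : Fin N → H),
    f = fun x => ∑ i, (a i * Real.cos ⟪x, h i⟫ + b i * Real.sin ⟪x, h i⟫)

/-!
Let `Pₙ` be the orthogonal projection onto the span of the first `n` points of a dense sequence;
then `φ ∘ Pₙ → φ` pointwise. Writing `Pₙ x = ∑ ⟪bᵢ, x⟫ bᵢ` in an orthonormal basis, `φ ∘ Pₙ` is a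
bounded continuous function `G` of finitely many coordinates. On the cube `|⟪bᵢ, x⟫| ≤ R` it agrees
with a continuous function on the torus, obtained by feeding each coordinate through a triangle
wave. By Stone–Weierstrass that function is a uniform limit of Fourier polynomials, whose real
parts pulled back to `H` are trigonometric polynomials and are bounded on all of `H` because they
are periodic; shrinking them by the factor `C / (C + ε)` keeps them below `C`.
-/

open UnitAddTorus

section TrigPolys

variable {H : Type*} [NormedAddCommGroup H] [InnerProductSpace ℝ H]

variable (H) in
def trigPolys : Submodule ℝ (H → ℝ) where
  carrier := {f | IsTrigPoly f}
  add_mem' := by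
    rintro _ _ ⟨N, a, b, h, rfl⟩ ⟨M, a', b', h', rfl⟩
    exact ⟨N + M, Fin.append a a', Fin.append b b', Fin.append h h', by
      funext x; simp [Fin.sum_univ_add]⟩
  zero_mem' := ⟨0, finZeroElim, finZeroElim, finZeroElim, by funext x; simp⟩
  smul_mem' := by
    rintro r _ ⟨N, a, b, h, rfl⟩
    exact ⟨N, r • a, r • b, h, by funext x; simp [Finset.mul_sum, mul_add, mul_assoc]⟩

lemma cos_inner_mem_trigPolys (h : H) : (fun x => Real.cos ⟪x, h⟫) ∈ trigPolys H :=
  ⟨1, fun _ => 1, fun _ => 0, fun _ => h, by funext x; simp⟩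

lemma sin_inner_mem_trigPolys (h : H) : (fun x => Real.sin ⟪x, h⟫) ∈ trigPolys H :=
  ⟨1, fun _ => 0, fun _ => 1, fun _ => h, by funext x; simp⟩

variable {ι : Type*} [Fintype ι]

lemma mFourier_coe_apply (n : ι → ℤ) (t : ι → ℝ) :
    mFourier n (fun i => (t i : UnitAddCircle)) =
      Complex.exp (↑(2 * Real.pi * ∑ i, n i * t i) * Complex.I) := by
  simp only [mFourier, ContinuousMap.coe_mk, fourier_coe_apply, ← Complex.exp_sum]
  congr 1
  push_cast
  rw [Finset.mul_sum, Finset.sum_mul]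
  refine Finset.sum_congr rfl fun i _ => ?_
  ring

lemma re_mul_mFourier_inner_mem_trigPolys (w : ι → H) (n : ι → ℤ) (c : ℂ) :
    (fun x => (c * mFourier n (fun i => (⟪w i, x⟫ : UnitAddCircle))).re) ∈ trigPolys H := by
  set h : H := (2 * Real.pi) • ∑ i, (n i : ℝ) • w i
  have hre : (fun x => (c * mFourier n (fun i => (⟪w i, x⟫ : UnitAddCircle))).re) =
      c.re • (fun x => Real.cos ⟪x, h⟫) - c.im • (fun x => Real.sin ⟪x, h⟫) := by
    funext x
    have hinner : ⟪x, h⟫ = 2 * Real.pi * ∑ i, n i * ⟪w i, x⟫ := by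
      simp only [h, real_inner_smul_right, inner_sum, real_inner_comm x]
    rw [mFourier_coe_apply, Complex.mul_re, Complex.exp_ofReal_mul_I_re,
      Complex.exp_ofReal_mul_I_im, ← hinner]
    rfl
  rw [hre]
  exact sub_mem (Submodule.smul_mem _ _ (cos_inner_mem_trigPolys h))
    (Submodule.smul_mem _ _ (sin_inner_mem_trigPolys h))

lemma re_comp_inner_mem_trigPolys {g : C(UnitAddTorus ι, ℂ)}
    (hg : g ∈ Submodule.span ℂ (Set.range mFourier)) (w : ι → H) :
    (fun x => (g (fun i => (⟪w i, x⟫ : UnitAddCircle))).re) ∈ trigPolys H := by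
  -- Real parts are only `ℝ`-linear, so the induction carries an arbitrary complex factor.
  suffices ∀ c : ℂ, (fun x => (c * g (fun i => (⟪w i, x⟫ : UnitAddCircle))).re) ∈ trigPolys H by
    simpa using this 1
  induction hg using Submodule.span_induction with
  | mem _ hg =>
    obtain ⟨n, rfl⟩ := hg
    exact re_mul_mFourier_inner_mem_trigPolys w n
  | zero =>
    intro c
    simp only [ContinuousMap.zero_apply, mul_zero, Complex.zero_re]
    exact (trigPolys H).zero_mem
  | add g₁ g₂ _ _ h₁ h₂ =>
    intro c
    convert add_mem (h₁ c) (h₂ c) using 1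
    funext x
    simp [mul_add]
  | smul a g _ hg =>
    intro c
    convert hg (c * a) using 2
    simp [mul_assoc]

end TrigPolys

noncomputable def triangleWave (θ : UnitAddCircle) : ℝ :=
  1 / 4 - ‖θ - ((1 / 4 : ℝ) : UnitAddCircle)‖

lemma continuous_triangleWave : Continuous triangleWave :=
  continuous_const.sub (continuous_id.sub continuous_const).norm

lemma triangleWave_coe {s : ℝ} (hs : |s| ≤ 1 / 4) : triangleWave s = s := by
  have hs' := abs_le.1 hs
  have hle : |s - 1 / 4| ≤ |(1 : ℝ)| / 2 := by rw [abs_one, abs_le]; constructor <;> linarith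
  rw [triangleWave, ← AddCircle.coe_sub, (AddCircle.norm_coe_eq_abs_iff _ one_ne_zero).2 hle,
    abs_of_nonpos (by linarith)]
  ring

lemma abs_div_add_mul_le {C η y z : ℝ} (hC : 0 ≤ C) (hη : 0 < η) (hz : |z| ≤ C)
    (hyz : |y - z| ≤ η) : |C / (C + η) * y| ≤ C ∧ |C / (C + η) * y - z| ≤ 2 * η := by
  have hCη : 0 < C + η := by linarith
  have hy : |y| ≤ C + η := by linarith [abs_sub_abs_le_abs_sub y z]
  have hshrink : |C / (C + η) * y - y| ≤ η := by
    rw [show C / (C + η) * y - y = -(η / (C + η) * y) by field_simp; ring, abs_neg, abs_mul,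
      abs_of_pos (div_pos hη hCη), div_mul_eq_mul_div, div_le_iff₀ hCη]
    exact mul_le_mul_of_nonneg_left hy hη.le
  refine ⟨?_, ?_⟩
  · rw [abs_mul, abs_of_nonneg (div_nonneg hC hCη.le), div_mul_eq_mul_div, div_le_iff₀ hCη]
    exact mul_le_mul_of_nonneg_left hy hC
  · calc |C / (C + η) * y - z| ≤ |C / (C + η) * y - y| + |y - z| := abs_sub_le _ _ _
      _ ≤ 2 * η := by linarith

lemma exists_mem_span_mFourier_re_near {ι : Type*} [Fintype ι] (F : C(UnitAddTorus ι, ℝ))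
    {C ε : ℝ} (hF : ∀ θ, |F θ| ≤ C) (hε : 0 < ε) :
    ∃ g ∈ Submodule.span ℂ (Set.range (mFourier (d := ι))),
      ∀ θ, |(g θ).re| ≤ C ∧ |(g θ).re - F θ| ≤ ε := by
  let F' : C(UnitAddTorus ι, ℂ) := ⟨fun θ => F θ, Complex.continuous_ofReal.comp F.continuous⟩
  have hF' : F' ∈ (Submodule.span ℂ (Set.range (mFourier (d := ι)))).topologicalClosure := by
    rw [span_mFourier_closure_eq_top]; trivial
  rw [← SetLike.mem_coe, Submodule.topologicalClosure_coe, Metric.mem_closure_iff] at hF'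
  obtain ⟨g₀, hg₀, hdist⟩ := hF' (ε / 2) (by positivity)
  refine ⟨(C / (C + ε / 2)) • g₀, Submodule.smul_of_tower_mem _ _ hg₀, fun θ => ?_⟩
  have hnear : |(g₀ θ).re - F θ| ≤ ε / 2 := by
    calc |(g₀ θ).re - F θ| = |(g₀ θ - F' θ).re| := by simp [F']
      _ ≤ ‖g₀ θ - F' θ‖ := Complex.abs_re_le_norm _
      _ ≤ dist g₀ F' := by rw [← dist_eq_norm]; exact ContinuousMap.dist_apply_le_dist θ
      _ ≤ ε / 2 := by rw [dist_comm]; exact hdist.le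
  have hC : 0 ≤ C := (abs_nonneg _).trans (hF θ)
  have := abs_div_add_mul_le hC (by positivity) (hF θ) hnear
  rw [mul_div_cancel₀ _ two_ne_zero] at this
  simpa only [ContinuousMap.smul_apply, Complex.smul_re, smul_eq_mul] using this

section Approximation

variable {H : Type*} [NormedAddCommGroup H] [InnerProductSpace ℝ H]

theorem exists_trigPoly_near_comp_inner {ι : Type*} [Fintype ι] (w : ι → H)
    {G : (ι → ℝ) → ℝ} (hG : Continuous G) {C R ε : ℝ} (hGC : ∀ u, |G u| ≤ C) (hR : 0 < R)
    (hε : 0 < ε) :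
    ∃ f ∈ trigPolys H, (∀ x, |f x| ≤ C) ∧
      ∀ x, (∀ i, |⟪w i, x⟫| ≤ R) → |f x - G (fun i => ⟪w i, x⟫)| ≤ ε := by
  let F : C(UnitAddTorus ι, ℝ) := ⟨fun θ => G (fun i => 4 * R * triangleWave (θ i)),
    hG.comp (continuous_pi fun i =>
      (continuous_triangleWave.comp (continuous_apply i)).const_mul _)⟩
  obtain ⟨g, hg, hgF⟩ := exists_mem_span_mFourier_re_near F (fun θ => hGC _) hε
  let v : ι → H := fun i => (4 * R)⁻¹ • w i
  refine ⟨_, re_comp_inner_mem_trigPolys hg v, fun x => (hgF _).1, fun x hx => ?_⟩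
  have hF : F (fun i => (⟪v i, x⟫ : UnitAddCircle)) = G (fun i => ⟪w i, x⟫) := by
    refine congrArg G (funext fun i => ?_)
    have hvi : ⟪v i, x⟫ = (4 * R)⁻¹ * ⟪w i, x⟫ := real_inner_smul_left _ _ _
    change 4 * R * triangleWave ⟪v i, x⟫ = _
    rw [hvi, triangleWave_coe]
    · field_simp
    · rw [abs_mul, abs_inv, abs_of_pos (by positivity : 0 < 4 * R),
        inv_mul_le_iff₀ (by positivity)]
      linarith [hx i]
  rw [← hF]
  exact (hgF _).2

theorem exists_trigPoly_near_comp_starProjection (V : Submodule ℝ H) [FiniteDimensional ℝ V]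
    {φ : H → ℝ} (hφ : Continuous φ) {C R ε : ℝ} (hφC : ∀ x, |φ x| ≤ C) (hR : 0 < R)
    (hε : 0 < ε) :
    ∃ f ∈ trigPolys H, (∀ x, |f x| ≤ C) ∧
      ∀ x, ‖V.starProjection x‖ ≤ R → |f x - φ (V.starProjection x)| ≤ ε := by
  let b := stdOrthonormalBasis ℝ V
  have hP : ∀ x, V.starProjection x = ∑ i, ⟪(b i : H), x⟫ • (b i : H) := fun x => by
    simp [b.starProjection_eq_sum_rankOne]
  obtain ⟨f, hf, hfC, hfφ⟩ := exists_trigPoly_near_comp_inner (fun i => (b i : H))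
    (G := fun u => φ (∑ i, u i • (b i : H))) (by fun_prop) (fun u => hφC _) hR hε
  refine ⟨f, hf, hfC, fun x hx => ?_⟩
  rw [hP]
  refine hfφ x fun i => ?_
  have hbi : ⟪(b i : H), x⟫ = ⟪(b i : H), V.starProjection x⟫ := by
    rw [← Submodule.inner_starProjection_left_eq_right,
      V.starProjection_eq_self_iff.mpr (b i).2]
  calc |⟪(b i : H), x⟫| ≤ ‖(b i : H)‖ * ‖V.starProjection x‖ := by
        rw [hbi]; exact abs_real_inner_le_norm _ _
    _ ≤ R := by rw [show ‖(b i : H)‖ = 1 from b.norm_eq_one i, one_mul]; exact hx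

end Approximation

lemma exists_monotone_finiteDimensional_dense {𝕜 E : Type*} [NontriviallyNormedField 𝕜]
    [NormedAddCommGroup E] [NormedSpace 𝕜 E] [TopologicalSpace.SeparableSpace E] :
    ∃ V : ℕ → Submodule 𝕜 E, (∀ n, FiniteDimensional 𝕜 (V n)) ∧ Monotone V ∧
      ⊤ ≤ (⨆ n, V n).topologicalClosure := by
  obtain ⟨z, hz⟩ := TopologicalSpace.exists_dense_seq E
  let V : ℕ → Submodule 𝕜 E := fun n => Submodule.span 𝕜 (z '' Set.Iio n)
  refine ⟨V, fun n => FiniteDimensional.span_of_finite 𝕜 ((Set.finite_Iio n).image z),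
    fun m n hmn => Submodule.span_mono (Set.image_mono (Set.Iio_subset_Iio hmn)), ?_⟩
  have hrange : Set.range z ⊆ (⨆ n, V n : Submodule 𝕜 E) := by
    rintro _ ⟨k, rfl⟩
    exact Submodule.mem_iSup_of_mem (k + 1)
      (Submodule.subset_span (Set.mem_image_of_mem z (Set.mem_Iio.2 (Nat.lt_succ_self k))))
  intro x _
  rw [← SetLike.mem_coe, Submodule.topologicalClosure_coe]
  exact closure_mono hrange (hz.closure_range ▸ Set.mem_univ x)

theorem trig_polynomials_pi_dense_general
    {H : Type*} [NormedAddCommGroup H] [InnerProductSpace ℝ H]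
    [TopologicalSpace.SeparableSpace H]
    (φ : H → ℝ) (hφ : UniformContinuous φ) (C : ℝ) (hC : ∀ x, |φ x| ≤ C) :
    ∃ φseq : ℕ → ℕ → H → ℝ, ∃ ψ : ℕ → H → ℝ,
      (∀ n₁ n₂, IsTrigPoly (φseq n₁ n₂)) ∧
      (∀ n₁ x, Tendsto (fun n₂ => φseq n₁ n₂ x) atTop (𝓝 (ψ n₁ x))) ∧
      (∀ x, Tendsto (fun n₁ => ψ n₁ x) atTop (𝓝 (φ x))) ∧
      (∀ n₁ n₂ x, |φseq n₁ n₂ x| ≤ C) := by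
  obtain ⟨V, hV_fin, hV_mono, hV_dense⟩ :=
    exists_monotone_finiteDimensional_dense (𝕜 := ℝ) (E := H)
  choose f hf hfC hfφ using fun n₁ n₂ : ℕ =>
    exists_trigPoly_near_comp_starProjection (V n₁) hφ.continuous hC
      (R := n₂ + 1) (ε := 1 / (n₂ + 1)) (by positivity) (by positivity)
  refine ⟨f, fun n x => φ ((V n).starProjection x), hf, fun n₁ x => ?_, fun x => ?_, hfC⟩
  · refine tendsto_iff_dist_tendsto_zero.2 (squeeze_zero'
      (Eventually.of_forall fun _ => dist_nonneg) ?_ tendsto_one_div_add_atTop_nhds_zero_nat)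
    filter_upwards [eventually_ge_atTop ⌈‖(V n₁).starProjection x‖⌉₊] with n₂ hn₂
    rw [Real.dist_eq]
    refine hfφ n₁ n₂ x ((Nat.le_ceil _).trans ?_)
    exact_mod_cast hn₂.trans (Nat.le_succ n₂)
  · exact (hφ.continuous.tendsto x).comp
      (Submodule.starProjection_tendsto_self V hV_mono x hV_dense)

/-- trigonometric polynomials are π-dense in `C_b(H)`: every bounded
uniformly continuous `φ : H → ℝ` is a two-indexed iterated bounded pointwise limit of
trigonometric polynomials, with sup norms bounded by any bound `C` for `φ`
(in particular by `‖φ‖_∞`). -/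
theorem trig_polynomials_pi_dense
    {H : Type*} [NormedAddCommGroup H] [InnerProductSpace ℝ H] [CompleteSpace H]
    [TopologicalSpace.SeparableSpace H]
    (φ : H → ℝ) (hφ : UniformContinuous φ) (C : ℝ) (hC : ∀ x, |φ x| ≤ C) :
    ∃ φseq : ℕ → ℕ → H → ℝ, ∃ ψ : ℕ → H → ℝ,
      (∀ n₁ n₂, IsTrigPoly (φseq n₁ n₂)) ∧
      (∀ n₁ x, Tendsto (fun n₂ => φseq n₁ n₂ x) atTop (𝓝 (ψ n₁ x))) ∧
      (∀ x, Tendsto (fun n₁ => ψ n₁ x) atTop (𝓝 (φ x))) ∧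
      (∀ n₁ n₂ x, |φseq n₁ n₂ x| ≤ C) :=
  trig_polynomials_pi_dense_general φ hφ C hC
end

section
/- With notation as above, for h ∈ D(A*), a > 0, and φ_a(x) = ∫_0^a e^{i⟨e^{sA}x,h⟩ − (1/2)⟨Q_s h,h⟩} ds, the limit lim_{t→0+} (R_tφ_a(x) − φ_a(x))/t exists pointwise and equals e^{i⟨e^{aA}x,h⟩ − (1/2)⟨Q_a h,h⟩} − e^{i⟨x,h⟩}, with |R_tφ_a(x) − φ_a(x)| ≤ 2t for all x. Hence φ_a belongs to the domain D(L) of the generator of the OU semigroup. -/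
open MeasureTheory Filter Topology
open scoped RealInnerProductSpace

variable {H : Type*} [NormedAddCommGroup H] [InnerProductSpace ℝ H] [CompleteSpace H]
  [TopologicalSpace.SeparableSpace H] [MeasurableSpace H] [BorelSpace H]

/-- `Q_t h = ∫_0^t e^{sA} Q e^{sA*} h ds`. -/
noncomputable def QtOp (S : ℝ → H →L[ℝ] H) (Q : H →L[ℝ] H) (t : ℝ) (h : H) : H :=
  ∫ u in (0:ℝ)..t, S u (Q ((ContinuousLinearMap.adjoint (S u)) h))

/-- The function `x ↦ e^{i⟪e^{sA}x, h⟫ - ⟪Q_s h, h⟫/2}`. -/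
noncomputable def ouExp (S : ℝ → H →L[ℝ] H) (Q : H →L[ℝ] H) (h : H) (s : ℝ) (x : H) : ℂ :=
  Complex.exp (Complex.I * (⟪S s x, h⟫ : ℂ) - (⟪QtOp S Q s h, h⟫ : ℂ) / 2)

/-- `φ_a(x) = ∫_0^a e^{i⟪e^{sA}x,h⟫ - ⟪Q_s h,h⟫/2} ds`. -/
noncomputable def phiA (S : ℝ → H →L[ℝ] H) (Q : H →L[ℝ] H) (h : H) (a : ℝ) (x : H) : ℂ :=
  ∫ s in (0:ℝ)..a, ouExp S Q h s x

/-- The Ornstein–Uhlenbeck semigroup `R_t φ(x) = ∫_H φ(e^{tA}x + y) N_{Q_t}(dy)`. -/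
noncomputable def ROU (S : ℝ → H →L[ℝ] H) (N : ℝ → Measure H) (t : ℝ)
    (φ : H → ℂ) (x : H) : ℂ :=
  ∫ y, φ (S t x + y) ∂(N t)

/-- Hypotheses: `S` is a C₀-semigroup, `Q` is nonnegative symmetric, and `N t` is the
centered Gaussian measure on `H` with covariance `Q_t`, characterized by its
characteristic functional `∫ e^{i⟪y,h⟫} N_t(dy) = e^{-⟪Q_t h,h⟫/2}`. -/
def IsOUSetup (S : ℝ → H →L[ℝ] H) (Q : H →L[ℝ] H) (N : ℝ → Measure H) : Prop :=
  S 0 = ContinuousLinearMap.id ℝ H ∧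
  (∀ t s : ℝ, 0 ≤ t → 0 ≤ s → S (t + s) = (S t).comp (S s)) ∧
  (∀ x : H, ContinuousOn (fun t => S t x) (Set.Ici 0)) ∧
  (∀ x y : H, ⟪Q x, y⟫ = ⟪x, Q y⟫) ∧ (∀ x : H, 0 ≤ ⟪Q x, x⟫) ∧
  (∀ h : H, ∀ t : ℝ,
    IntervalIntegrable (fun u => S u (Q ((ContinuousLinearMap.adjoint (S u)) h)))
      MeasureTheory.volume 0 t) ∧
  (∀ t, IsProbabilityMeasure (N t)) ∧
  (∀ t : ℝ, 0 ≤ t → ∀ h : H,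
    ∫ y, Complex.exp (Complex.I * (⟪y, h⟫ : ℂ)) ∂(N t) =
      Complex.exp (-(⟪QtOp S Q t h, h⟫ : ℂ) / 2))

/-- Membership `φ ∈ D(L)` with `L φ = g` for the generator of the OU semigroup
(complex-valued version): bounded uniformly continuous functions with pointwise
convergence of the difference quotients, uniformly bounded for `t ∈ (0,1)`. -/
def MemDomL (S : ℝ → H →L[ℝ] H) (N : ℝ → Measure H) (φ g : H → ℂ) : Prop :=
  UniformContinuous φ ∧ (∃ C, ∀ x, ‖φ x‖ ≤ C) ∧
  UniformContinuous g ∧ (∃ C, ∀ x, ‖g x‖ ≤ C) ∧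
  (∀ x, Tendsto (fun t : ℝ => (ROU S N t φ x - φ x) / (t : ℂ))
    (𝓝[>] (0:ℝ)) (𝓝 (g x))) ∧
  (∃ C, ∀ t ∈ Set.Ioo (0:ℝ) 1, ∀ x, ‖ROU S N t φ x - φ x‖ / t ≤ C)

/-!
Fubini and the characteristic functional of `N t` turn `R_t φ_a` into the shifted integral
`∫_t^{a+t} e_s ds` of the exponentials `e_s = ouExp S Q h s`: the cocycle identity
`Q_{s+t} = Q_s + e^{sA} Q_t e^{sA*}` moves the time of `e_s` forward by `t`. Hence
`R_t φ_a - φ_a = ∫_a^{a+t} e_s ds - ∫_0^t e_s ds`, which is at most `2t` in norm since `|e_s| ≤ 1`,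
and whose quotient by `t` tends to `e_a - e_0` by the fundamental theorem of calculus. Uniform
continuity holds because `e_s` is `‖e^{sA}‖ ‖h‖`-Lipschitz, and `‖e^{sA}‖` is bounded on `[0, a]`
by Banach–Steinhaus.
-/

open Set
open scoped NNReal
open ContinuousLinearMap (adjoint)

theorem Complex.norm_exp_I_mul_sub_sub_exp_I_mul_sub_le {w : ℂ} (hw : 0 ≤ w.re) (α β : ℝ) :
    ‖Complex.exp (Complex.I * α - w) - Complex.exp (Complex.I * β - w)‖ ≤ |α - β| := by
  have hsplit : Complex.exp (Complex.I * α - w) - Complex.exp (Complex.I * β - w)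
      = Complex.exp (Complex.I * β - w) * (Complex.exp (Complex.I * ↑(α - β)) - 1) := by
    rw [mul_sub, mul_one, ← Complex.exp_add]
    push_cast
    ring_nf
  rw [hsplit, norm_mul, Complex.norm_exp]
  calc Real.exp (Complex.I * β - w).re * ‖Complex.exp (Complex.I * ↑(α - β)) - 1‖
      ≤ 1 * ‖α - β‖ := by
        gcongr
        · simpa using hw
        · exact Real.norm_exp_I_mul_ofReal_sub_one_le
    _ = |α - β| := by rw [one_mul, Real.norm_eq_abs]

theorem intervalIntegrable_of_continuousOn_Ici {E : Type*} [NormedAddCommGroup E] {f : ℝ → E}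
    {c u v : ℝ} (hf : ContinuousOn f (Ici c)) (hu : c ≤ u) (hv : c ≤ v) :
    IntervalIntegrable f volume u v :=
  (hf.mono fun _ hs => le_trans (le_min hu hv) hs.1).intervalIntegrable

section

variable {E : Type*} [NormedAddCommGroup E] [NormedSpace ℝ E] {f : ℝ → E}

theorem tendsto_inv_smul_intervalIntegral_add [CompleteSpace E] {b : ℝ}
    (hf : ContinuousOn f (Ici b)) :
    Tendsto (fun t => t⁻¹ • ∫ s in b..b + t, f s) (𝓝[>] 0) (𝓝 (f b)) := by
  have hderiv : HasDerivWithinAt (fun u => ∫ s in b..u, f s) (f b) (Ici b) b :=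
    intervalIntegral.integral_hasDerivWithinAt_right .refl
      ((hf.stronglyMeasurableAtFilter_nhdsWithin measurableSet_Ici b).filter_mono
        (nhdsWithin_mono _ Ioi_subset_Ici_self))
      ((hf b self_mem_Ici).mono Ioi_subset_Ici_self)
  have hshift : Tendsto (b + ·) (𝓝[>] 0) (𝓝[>] b) := by
    refine tendsto_nhdsWithin_of_tendsto_nhds_of_eventually_within _ ?_ ?_
    · simpa using (continuous_const_add b).continuousWithinAt (s := Ioi 0) (x := 0) |>.tendsto
    · filter_upwards [self_mem_nhdsWithin] with t ht using lt_add_of_pos_right b ht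
  have := (hasDerivWithinAt_iff_tendsto_slope.mp hderiv).comp (by simpa using hshift)
  refine this.congr fun t => ?_
  simp [slope_def_module]

theorem intervalIntegral_shift_sub {a t : ℝ} (hf : ContinuousOn f (Ici 0)) (ha : 0 ≤ a)
    (ht : 0 ≤ t) :
    (∫ s in t..a + t, f s) - ∫ s in 0..a, f s = (∫ s in a..a + t, f s) - ∫ s in 0..t, f s :=
  intervalIntegral.integral_interval_sub_interval_comm'
    (intervalIntegrable_of_continuousOn_Ici hf ht (by positivity))
    (intervalIntegrable_of_continuousOn_Ici hf le_rfl ha)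
    (intervalIntegrable_of_continuousOn_Ici hf ht le_rfl)

theorem norm_intervalIntegral_shift_sub_le {a t C : ℝ} (hf : ContinuousOn f (Ici 0))
    (hC : ∀ s, 0 ≤ s → ‖f s‖ ≤ C) (ha : 0 ≤ a) (ht : 0 ≤ t) :
    ‖(∫ s in t..a + t, f s) - ∫ s in 0..a, f s‖ ≤ 2 * C * t := by
  have hbound {u v : ℝ} (hu : 0 ≤ u) (huv : u ≤ v) : ‖∫ s in u..v, f s‖ ≤ C * (v - u) := by
    have := intervalIntegral.norm_integral_le_of_norm_le_const fun s hs =>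
      hC s (hu.trans (uIoc_of_le huv ▸ hs).1.le)
    rwa [abs_of_nonneg (sub_nonneg.2 huv)] at this
  rw [intervalIntegral_shift_sub hf ha ht]
  calc _ ≤ ‖∫ s in a..a + t, f s‖ + ‖∫ s in 0..t, f s‖ := norm_sub_le _ _
    _ ≤ C * (a + t - a) + C * (t - 0) :=
        add_le_add (hbound ha (by linarith)) (hbound le_rfl ht)
    _ = 2 * C * t := by ring

theorem tendsto_inv_smul_intervalIntegral_shift_sub [CompleteSpace E] {a : ℝ}
    (hf : ContinuousOn f (Ici 0)) (ha : 0 ≤ a) :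
    Tendsto (fun t => t⁻¹ • ((∫ s in t..a + t, f s) - ∫ s in 0..a, f s)) (𝓝[>] 0)
      (𝓝 (f a - f 0)) := by
  have hlim := (tendsto_inv_smul_intervalIntegral_add (hf.mono (Ici_subset_Ici.2 ha))).sub
    (tendsto_inv_smul_intervalIntegral_add hf)
  refine hlim.congr' ?_
  filter_upwards [self_mem_nhdsWithin] with t ht
  rw [intervalIntegral_shift_sub hf ha (le_of_lt ht), smul_sub, zero_add]

end

theorem lipschitzWith_intervalIntegral {X E : Type*} [PseudoMetricSpace X] [NormedAddCommGroup E]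
    [NormedSpace ℝ E] {F : ℝ → X → E} {K : ℝ≥0} {a b : ℝ}
    (hint : ∀ x, IntervalIntegrable (F · x) volume a b)
    (hF : ∀ s ∈ uIoc a b, LipschitzWith K (F s)) :
    LipschitzWith (K * ‖b - a‖₊) (fun x => ∫ s in a..b, F s x) := by
  refine LipschitzWith.of_dist_le_mul fun x y => ?_
  rw [dist_eq_norm, ← intervalIntegral.integral_sub (hint x) (hint y)]
  calc _ ≤ K * dist x y * |b - a| := intervalIntegral.norm_integral_le_of_norm_le_const
          fun s hs => by rw [← dist_eq_norm]; exact (hF s hs).dist_le_mul x y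
    _ = _ := by push_cast; rw [Real.norm_eq_abs]; ring

theorem IsCompact.exists_forall_nnnorm_le_of_continuousOn {ι 𝕜 E F : Type*} [TopologicalSpace ι]
    [NontriviallyNormedField 𝕜] [NormedAddCommGroup E] [NormedSpace 𝕜 E] [CompleteSpace E]
    [NormedAddCommGroup F] [NormedSpace 𝕜 F] {T : ι → E →L[𝕜] F} {K : Set ι} (hK : IsCompact K)
    (hT : ∀ x, ContinuousOn (fun i => T i x) K) : ∃ M : ℝ≥0, ∀ i ∈ K, ‖T i‖₊ ≤ M := by
  obtain ⟨C, hC⟩ := banach_steinhaus (g := fun i : K => T i) fun x => by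
    obtain ⟨C, hC⟩ := hK.exists_bound_of_continuousOn (hT x)
    exact ⟨C, fun i => hC i i.2⟩
  exact ⟨C.toNNReal, fun i hi => by
    rw [← NNReal.coe_le_coe, coe_nnnorm]; exact (hC ⟨i, hi⟩).trans (Real.le_coe_toNNReal C)⟩

section OrnsteinUhlenbeck

variable {E : Type*} [NormedAddCommGroup E] [InnerProductSpace ℝ E] [CompleteSpace E]
  {S : ℝ → E →L[ℝ] E} {Q : E →L[ℝ] E} {h : E}

theorem continuous_QtOp
    (hq : ∀ t, IntervalIntegrable (fun u => S u (Q (adjoint (S u) h))) volume 0 t) :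
    Continuous (fun t => QtOp S Q t h) :=
  intervalIntegral.continuous_primitive (fun a b => (hq a).symm.trans (hq b)) 0

theorem inner_QtOp_self_nonneg {t : ℝ} (hQ : ∀ x, 0 ≤ ⟪Q x, x⟫)
    (hq : IntervalIntegrable (fun u => S u (Q (adjoint (S u) h))) volume 0 t) (ht : 0 ≤ t) :
    0 ≤ ⟪QtOp S Q t h, h⟫ := by
  rw [real_inner_comm, QtOp, ← innerSL_apply_apply ℝ, ← (innerSL ℝ h).intervalIntegral_comp_comm hq]
  refine intervalIntegral.integral_nonneg ht fun u _ => ?_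
  rw [innerSL_apply_apply, ← ContinuousLinearMap.adjoint_inner_left, real_inner_comm]
  exact hQ _

theorem map_QtOp_adjoint {s t : ℝ}
    (hSadd : ∀ t s : ℝ, 0 ≤ t → 0 ≤ s → S (t + s) = (S t).comp (S s))
    (hq : ∀ g t, IntervalIntegrable (fun u => S u (Q (adjoint (S u) g))) volume 0 t)
    (hs : 0 ≤ s) (ht : 0 ≤ t) :
    S s (QtOp S Q t (adjoint (S s) h)) = QtOp S Q (s + t) h - QtOp S Q s h := by
  have hshift : ∀ u ∈ uIcc 0 t, S s (S u (Q (adjoint (S u) (adjoint (S s) h))))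
      = S (s + u) (Q (adjoint (S (s + u)) h)) := fun u hu => by
    rw [hSadd s u hs (uIcc_of_le ht ▸ hu).1, ContinuousLinearMap.adjoint_comp]
    rfl
  rw [QtOp, ← (S s).intervalIntegral_comp_comm (hq _ t), QtOp, QtOp,
    intervalIntegral.integral_interval_sub_left (hq h _) (hq h s),
    intervalIntegral.integral_congr hshift,
    intervalIntegral.integral_comp_add_left (fun v => S v (Q (adjoint (S v) h))), add_zero]

theorem ouExp_zero (hS0 : S 0 = ContinuousLinearMap.id ℝ E) (x : E) :
    ouExp S Q h 0 x = Complex.exp (Complex.I * (⟪x, h⟫ : ℂ)) := by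
  simp [ouExp, QtOp, hS0]

theorem norm_ouExp_le_one {s : ℝ} (hc : 0 ≤ ⟪QtOp S Q s h, h⟫) (x : E) : ‖ouExp S Q h s x‖ ≤ 1 := by
  rw [ouExp, Complex.norm_exp]
  simpa using div_nonneg hc zero_le_two

theorem lipschitzWith_ouExp {s : ℝ} (hc : 0 ≤ ⟪QtOp S Q s h, h⟫) :
    LipschitzWith (‖S s‖₊ * ‖h‖₊) (ouExp S Q h s) := by
  refine LipschitzWith.of_dist_le_mul fun x y => ?_
  rw [dist_eq_norm, dist_eq_norm]
  have hre : 0 ≤ ((⟪QtOp S Q s h, h⟫ : ℂ) / 2).re := by simpa using div_nonneg hc zero_le_two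
  calc _ ≤ |⟪S s x, h⟫ - ⟪S s y, h⟫| := Complex.norm_exp_I_mul_sub_sub_exp_I_mul_sub_le hre _ _
    _ = |⟪S s (x - y), h⟫| := by rw [map_sub, inner_sub_left]
    _ ≤ ‖S s‖ * ‖x - y‖ * ‖h‖ :=
        (abs_real_inner_le_norm _ _).trans (by gcongr; exact (S s).le_opNorm _)
    _ = _ := by push_cast; ring

theorem continuousOn_ouExp {x : E} (hS : ContinuousOn (fun t => S t x) (Ici 0))
    (hq : ∀ t, IntervalIntegrable (fun u => S u (Q (adjoint (S u) h))) volume 0 t) :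
    ContinuousOn (fun s => ouExp S Q h s x) (Ici 0) := by
  have := continuous_QtOp hq
  unfold ouExp
  fun_prop

theorem integral_ouExp_shift [MeasurableSpace E] {s t : ℝ} {μ : Measure E}
    (hSadd : ∀ t s : ℝ, 0 ≤ t → 0 ≤ s → S (t + s) = (S t).comp (S s))
    (hq : ∀ g t, IntervalIntegrable (fun u => S u (Q (adjoint (S u) g))) volume 0 t)
    (hμ : ∀ g : E, ∫ y, Complex.exp (Complex.I * (⟪y, g⟫ : ℂ)) ∂μ =
      Complex.exp (-(⟪QtOp S Q t g, g⟫ : ℂ) / 2))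
    (hs : 0 ≤ s) (ht : 0 ≤ t) (x : E) :
    ∫ y, ouExp S Q h s (S t x + y) ∂μ = ouExp S Q h (s + t) x := by
  have hsplit : ∀ y, ouExp S Q h s (S t x + y)
      = Complex.exp (Complex.I * (⟪S (s + t) x, h⟫ : ℂ) - (⟪QtOp S Q s h, h⟫ : ℂ) / 2)
        * Complex.exp (Complex.I * (⟪y, adjoint (S s) h⟫ : ℂ)) := fun y => by
    rw [ouExp, ← Complex.exp_add, map_add, hSadd s t hs ht, ContinuousLinearMap.comp_apply,
      inner_add_left, ContinuousLinearMap.adjoint_inner_right]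
    push_cast
    ring_nf
  have hcov : ⟪QtOp S Q t (adjoint (S s) h), adjoint (S s) h⟫
      = ⟪QtOp S Q (s + t) h, h⟫ - ⟪QtOp S Q s h, h⟫ := by
    rw [ContinuousLinearMap.adjoint_inner_right, map_QtOp_adjoint hSadd hq hs ht, inner_sub_left]
  simp_rw [hsplit]
  rw [integral_const_mul, hμ, ← Complex.exp_add, ouExp, hcov]
  push_cast
  ring_nf

theorem ROU_phiA_eq_intervalIntegral [MeasurableSpace E] [OpensMeasurableSpace E]
    {N : ℝ → Measure E} {a t : ℝ} [IsProbabilityMeasure (N t)]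
    (hSadd : ∀ t s : ℝ, 0 ≤ t → 0 ≤ s → S (t + s) = (S t).comp (S s))
    (hS : ∀ x : E, ContinuousOn (fun t => S t x) (Ici 0)) (hQ : ∀ x, 0 ≤ ⟪Q x, x⟫)
    (hq : ∀ g t, IntervalIntegrable (fun u => S u (Q (adjoint (S u) g))) volume 0 t)
    (hN : ∀ g : E, ∫ y, Complex.exp (Complex.I * (⟪y, g⟫ : ℂ)) ∂(N t) =
      Complex.exp (-(⟪QtOp S Q t g, g⟫ : ℂ) / 2))
    (ha : 0 ≤ a) (ht : 0 ≤ t) (x : E) :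
    ROU S N t (phiA S Q h a) x = ∫ s in t..a + t, ouExp S Q h s x := by
  -- clamping `s` to `[0, ∞)` makes the integrand continuous in `s` on all of `ℝ`
  set G : ℝ → E → ℂ := fun s y => ouExp S Q h (max s 0) (S t x + y)
  have hc : ∀ s, 0 ≤ ⟪QtOp S Q (max s 0) h, h⟫ := fun s =>
    inner_QtOp_self_nonneg hQ (hq h _) (le_max_right s 0)
  have hG_meas : StronglyMeasurable (Function.uncurry G) :=
    stronglyMeasurable_uncurry_of_continuous_of_stronglyMeasurable
      (fun y => (continuousOn_ouExp (hS _) (hq h)).comp_continuous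
        (continuous_id.max continuous_const) fun s => le_max_right s 0)
      (fun s => ((lipschitzWith_ouExp (hc s)).continuous.comp
        (continuous_const.add continuous_id)).stronglyMeasurable)
  have hG_int : Integrable (Function.uncurry G) ((volume.restrict (Ioc 0 a)).prod (N t)) :=
    .of_bound hG_meas.aestronglyMeasurable 1
      (.of_forall fun p => norm_ouExp_le_one (hc p.1) _)
  have hclamp : ∀ s ∈ uIcc 0 a, max s 0 = s := fun s hs => max_eq_left (uIcc_of_le ha ▸ hs).1
  calc ROU S N t (phiA S Q h a) x = ∫ y, (∫ s in 0..a, G s y) ∂(N t) := by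
        refine integral_congr_ae (.of_forall fun y => ?_)
        exact intervalIntegral.integral_congr fun s hs => by simp only [G, hclamp s hs]
    _ = ∫ s in 0..a, ∫ y, G s y ∂(N t) :=
        (intervalIntegral_integral_swap (by rwa [uIoc_of_le ha])).symm
    _ = ∫ s in 0..a, ouExp S Q h (s + t) x := intervalIntegral.integral_congr fun s hs => by
        simp only [G, hclamp s hs]
        exact integral_ouExp_shift hSadd hq hN (uIcc_of_le ha ▸ hs).1 ht x
    _ = ∫ s in t..a + t, ouExp S Q h s x := by
        simpa using intervalIntegral.integral_comp_add_right (a := 0) (b := a)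
          (fun s => ouExp S Q h s x) t

theorem norm_phiA_le {a : ℝ} (hQ : ∀ x, 0 ≤ ⟪Q x, x⟫)
    (hq : ∀ t, IntervalIntegrable (fun u => S u (Q (adjoint (S u) h))) volume 0 t) (ha : 0 ≤ a)
    (x : E) : ‖phiA S Q h a x‖ ≤ a := by
  have := intervalIntegral.norm_integral_le_of_norm_le_const (a := 0) (b := a) (C := 1)
    fun s hs => norm_ouExp_le_one (inner_QtOp_self_nonneg hQ (hq s) (uIoc_of_le ha ▸ hs).1.le) x
  rwa [sub_zero, abs_of_nonneg ha, one_mul] at this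

theorem uniformContinuous_phiA {a : ℝ} (hS : ∀ x : E, ContinuousOn (fun t => S t x) (Ici 0))
    (hQ : ∀ x, 0 ≤ ⟪Q x, x⟫)
    (hq : ∀ t, IntervalIntegrable (fun u => S u (Q (adjoint (S u) h))) volume 0 t) (ha : 0 ≤ a) :
    UniformContinuous (phiA S Q h a) := by
  obtain ⟨M, hM⟩ := (isCompact_Icc (a := 0) (b := a)).exists_forall_nnnorm_le_of_continuousOn
    fun x => (hS x).mono Icc_subset_Ici_self
  refine (lipschitzWith_intervalIntegral (K := M * ‖h‖₊)
    (fun x => intervalIntegrable_of_continuousOn_Ici (continuousOn_ouExp (hS x) hq) le_rfl ha)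
    fun s hs => ?_).uniformContinuous
  have hs' : s ∈ Icc 0 a := Ioc_subset_Icc_self (uIoc_of_le ha ▸ hs)
  exact (lipschitzWith_ouExp (inner_QtOp_self_nonneg hQ (hq s) hs'.1)).weaken
    (mul_le_mul_left (hM s hs') _)

end OrnsteinUhlenbeck

theorem phiA_mem_domain_of_ou_generator_general
    (S : ℝ → H →L[ℝ] H) (Q : H →L[ℝ] H) (N : ℝ → Measure H)
    (hOU : IsOUSetup S Q N)
    (h : H)
    (a : ℝ) (ha : 0 < a) :
    (∀ x, Tendsto (fun t : ℝ => (ROU S N t (phiA S Q h a) x - phiA S Q h a x) / (t : ℂ))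
      (𝓝[>] (0:ℝ))
      (𝓝 (ouExp S Q h a x - Complex.exp (Complex.I * (⟪x, h⟫ : ℂ))))) ∧
    (∀ t : ℝ, 0 < t → ∀ x, ‖ROU S N t (phiA S Q h a) x - phiA S Q h a x‖ ≤ 2 * t) ∧
    MemDomL S N (phiA S Q h a)
      (fun x => ouExp S Q h a x - Complex.exp (Complex.I * (⟪x, h⟫ : ℂ))) := by
  obtain ⟨hS0, hSadd, hS, -, hQ, hq, hN, hchar⟩ := hOU
  have hc (s : ℝ) (hs : 0 ≤ s) : 0 ≤ ⟪QtOp S Q s h, h⟫ := inner_QtOp_self_nonneg hQ (hq h s) hs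
  have hcont (x : H) : ContinuousOn (fun s => ouExp S Q h s x) (Ici 0) :=
    continuousOn_ouExp (hS x) (hq h)
  have hdiff (t : ℝ) (ht : 0 ≤ t) (x : H) : ROU S N t (phiA S Q h a) x - phiA S Q h a x
      = (∫ s in t..a + t, ouExp S Q h s x) - ∫ s in 0..a, ouExp S Q h s x := by
    have := hN t
    rw [ROU_phiA_eq_intervalIntegral hSadd hS hQ hq (hchar t ht) ha.le ht x, phiA]
  have hbound (t : ℝ) (ht : 0 < t) (x : H) :
      ‖ROU S N t (phiA S Q h a) x - phiA S Q h a x‖ ≤ 2 * t := by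
    simpa [hdiff t ht.le x] using norm_intervalIntegral_shift_sub_le (hcont x)
      (fun s hs => norm_ouExp_le_one (hc s hs) x) ha.le ht.le
  have hlim (x : H) : Tendsto (fun t : ℝ => (ROU S N t (phiA S Q h a) x - phiA S Q h a x) / t)
      (𝓝[>] 0) (𝓝 (ouExp S Q h a x - ouExp S Q h 0 x)) := by
    refine (tendsto_inv_smul_intervalIntegral_shift_sub (hcont x) ha.le).congr' ?_
    filter_upwards [self_mem_nhdsWithin] with t ht
    rw [hdiff t (le_of_lt ht) x, Complex.real_smul, div_eq_inv_mul, Complex.ofReal_inv]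
  simp only [← ouExp_zero (Q := Q) (h := h) hS0]
  refine ⟨hlim, hbound, uniformContinuous_phiA hS hQ (hq h) ha.le,
    ⟨a, norm_phiA_le hQ (hq h) ha.le⟩,
    (lipschitzWith_ouExp (hc a ha.le)).uniformContinuous.sub
      (lipschitzWith_ouExp (hc 0 le_rfl)).uniformContinuous,
    ⟨2, fun x => ?_⟩, hlim, ⟨2, fun t ht x => (div_le_iff₀ ht.1).2 (hbound t ht.1 x)⟩⟩
  calc _ ≤ ‖ouExp S Q h a x‖ + ‖ouExp S Q h 0 x‖ := norm_sub_le _ _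
    _ ≤ 1 + 1 := add_le_add (norm_ouExp_le_one (hc a ha.le) x) (norm_ouExp_le_one (hc 0 le_rfl) x)
    _ = 2 := one_add_one_eq_two

/-- for `h ∈ D(A*)` and `a > 0`, the difference quotients of the OU
semigroup on `φ_a` converge pointwise to
`e^{i⟪e^{aA}x,h⟫ - ⟪Q_a h,h⟫/2} - e^{i⟪x,h⟫}`, with `|R_tφ_a(x) - φ_a(x)| ≤ 2t`;
hence `φ_a ∈ D(L)`. -/
theorem phiA_mem_domain_of_ou_generator
    (S : ℝ → H →L[ℝ] H) (Q : H →L[ℝ] H) (N : ℝ → Measure H)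
    (hOU : IsOUSetup S Q N)
    (h : H)
    (hDom : ∃ w : H, Tendsto (fun t : ℝ =>
      t⁻¹ • ((ContinuousLinearMap.adjoint (S t)) h - h)) (𝓝[>] (0:ℝ)) (𝓝 w))
    (a : ℝ) (ha : 0 < a) :
    (∀ x, Tendsto (fun t : ℝ => (ROU S N t (phiA S Q h a) x - phiA S Q h a x) / (t : ℂ))
      (𝓝[>] (0:ℝ))
      (𝓝 (ouExp S Q h a x - Complex.exp (Complex.I * (⟪x, h⟫ : ℂ))))) ∧
    (∀ t : ℝ, 0 < t → ∀ x, ‖ROU S N t (phiA S Q h a) x - phiA S Q h a x‖ ≤ 2 * t) ∧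
    MemDomL S N (phiA S Q h a)
      (fun x => ouExp S Q h a x - Complex.exp (Complex.I * (⟪x, h⟫ : ℂ))) :=
  phiA_mem_domain_of_ou_generator_general S Q N hOU h a ha
end

section
/- Let A generate a C_0-semigroup on H. For h ∈ D(A*), the exponential function φ_h(x) = e^{i⟨x,h⟩} satisfies lim_{t→0+} (R_tφ_h(x) − φ_h(x))/t = [−(1/2)⟨Qh,h⟩ + i⟨A*h, x⟩] e^{i⟨x,h⟩} pointwise; if A ≠ 0 this limit is an unbounded function of x, so D(L) ∩ E_A(H) = {0}, i.e., no nonzero trigonometric polynomial with frequencies in D(A*) lies in the domain of the OU generator. -/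
open MeasureTheory Filter Topology
open scoped RealInnerProductSpace

variable {H : Type*} [NormedAddCommGroup H] [InnerProductSpace ℝ H] [CompleteSpace H]
  [TopologicalSpace.SeparableSpace H] [MeasurableSpace H] [BorelSpace H]

/-!
By the characteristic functional of `N_t`, `R_t e^{i⟪·,h⟫}(x) = e^{g(t)}` with
`g(t) = i⟪x, e^{tA*}h⟫ - ⟪Q_t h, h⟫/2`, so the limit is the right derivative of `e^{g}` at `0`,
given by the chain rule from `g'(0) = i⟪x, A*h⟫ - ⟪Qh, h⟫/2` (the second term by the fundamental
theorem of calculus). Along `x = s A*h` the factor `i⟪A*h, x⟫` grows linearly while the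
exponential has modulus one, so the limit is unbounded, whereas the generator of any element of
`D(L)` is bounded.
-/

open Set ContinuousLinearMap

section

variable {E : Type*} [NormedAddCommGroup E] [InnerProductSpace ℝ E]

theorem not_bounded_add_I_mul_inner_mul_exp (c : ℂ) {a : E} (ha : a ≠ 0) (θ : E → ℝ) :
    ¬ ∃ C, ∀ x, ‖(c + Complex.I * (⟪a, x⟫ : ℂ)) * Complex.exp (Complex.I * (θ x : ℂ))‖ ≤ C := by
  rintro ⟨C, hC⟩
  set r := C + ‖c‖ + 1
  have ha2 : 0 < ‖a‖ ^ 2 := by positivity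
  have hinner : ⟪a, (r / ‖a‖ ^ 2) • a⟫ = r := by
    rw [real_inner_smul_right, real_inner_self_eq_norm_sq]
    field_simp
  have hbound := hC ((r / ‖a‖ ^ 2) • a)
  rw [norm_mul, Complex.norm_exp_I_mul_ofReal, mul_one, hinner] at hbound
  have hIr : ‖Complex.I * (r : ℂ)‖ ≤ ‖c + Complex.I * (r : ℂ)‖ + ‖c‖ := by
    simpa using norm_sub_le (c + Complex.I * (r : ℂ)) c
  have hr : r ≤ ‖Complex.I * (r : ℂ)‖ := by
    simpa using le_abs_self r
  linarith

theorem rou_cexp_inner_eq_mul_integral [MeasurableSpace E] (S : ℝ → E →L[ℝ] E)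
    (N : ℝ → Measure E) (t : ℝ) (h x : E) :
    ROU S N t (fun y => Complex.exp (Complex.I * (⟪y, h⟫ : ℂ))) x =
      Complex.exp (Complex.I * (⟪S t x, h⟫ : ℂ)) *
        ∫ y, Complex.exp (Complex.I * (⟪y, h⟫ : ℂ)) ∂(N t) := by
  simp_rw [ROU, inner_add_left, Complex.ofReal_add, mul_add, Complex.exp_add]
  exact integral_const_mul _ _

theorem hasDerivWithinAt_inner_QtOp [CompleteSpace E] {S : ℝ → E →L[ℝ] E} {Q : E →L[ℝ] E}
    {h : E} (hS0 : S 0 = ContinuousLinearMap.id ℝ E)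
    (hint : ∀ t, IntervalIntegrable (fun u => S u (Q (adjoint (S u) h))) volume 0 t)
    (hcont : ContinuousWithinAt (fun t => adjoint (S t) h) (Ioi 0) 0) :
    HasDerivWithinAt (fun t => ⟪QtOp S Q t h, h⟫) ⟪Q h, h⟫ (Ici 0) 0 := by
  -- Pass to the scalar integrand `⟪Q (S u)* h, (S u)* h⟫`: it is continuous at `0⁺` because
  -- `(S u)* h` is, while the vector integrand `S u Q (S u)* h` would need a bound on `‖S u‖`.
  set f : ℝ → ℝ := fun u => ⟪Q (adjoint (S u) h), adjoint (S u) h⟫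
  have hf_eq : f = fun u => innerSL ℝ h (S u (Q (adjoint (S u) h))) := by
    ext u
    simp [f, adjoint_inner_right, real_inner_comm h]
  have hfint : ∀ t, IntervalIntegrable f volume 0 t := fun t => by
    rw [hf_eq]
    exact ⟨(innerSL ℝ h).integrable_comp (hint t).1, (innerSL ℝ h).integrable_comp (hint t).2⟩
  have hQt : (fun t => ⟪QtOp S Q t h, h⟫) = fun t => ∫ u in (0:ℝ)..t, f u := by
    ext t
    simp only [hf_eq, QtOp]
    rw [(innerSL ℝ h).intervalIntegral_comp_comm (hint t), innerSL_apply_apply, real_inner_comm]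
  have hf0 : f 0 = ⟪Q h, h⟫ := by simp [f, hS0, adjoint_id]
  rw [hQt, ← hf0]
  exact intervalIntegral.integral_hasDerivWithinAt_right (hfint 0)
    ⟨Ioc 0 1, Ioc_mem_nhdsGT zero_lt_one, (hfint 1).1.aestronglyMeasurable⟩
    ((Q.continuous.inner continuous_id).continuousAt.comp_continuousWithinAt hcont)

variable [CompleteSpace E] [MeasurableSpace E] {S : ℝ → E →L[ℝ] E} {Q : E →L[ℝ] E}
  {N : ℝ → Measure E}

theorem IsOUSetup.rou_cexp_inner (hOU : IsOUSetup S Q N) {t : ℝ} (ht : 0 ≤ t) (h x : E) :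
    ROU S N t (fun y => Complex.exp (Complex.I * (⟪y, h⟫ : ℂ))) x =
      Complex.exp (Complex.I * (⟪x, adjoint (S t) h⟫ : ℂ) - (⟪QtOp S Q t h, h⟫ : ℂ) / 2) := by
  obtain ⟨-, -, -, -, -, -, -, hchar⟩ := hOU
  rw [rou_cexp_inner_eq_mul_integral, hchar t ht h, ← Complex.exp_add, adjoint_inner_right]
  ring_nf

theorem IsOUSetup.hasDerivWithinAt_rou_cexp_inner (hOU : IsOUSetup S Q N) {h Ah : E}
    (hAh : Tendsto (fun t : ℝ => t⁻¹ • (adjoint (S t) h - h)) (𝓝[>] 0) (𝓝 Ah)) (x : E) :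
    HasDerivWithinAt (fun t => ROU S N t (fun y => Complex.exp (Complex.I * (⟪y, h⟫ : ℂ))) x)
      ((-(⟪Q h, h⟫ : ℂ) / 2 + Complex.I * (⟪Ah, x⟫ : ℂ)) *
        Complex.exp (Complex.I * (⟪x, h⟫ : ℂ))) (Ioi 0) 0 := by
  have ⟨hS0, _, _, _, _, hQint, _, _⟩ := hOU
  set w := fun t => adjoint (S t) h
  have hw0 : w 0 = h := by simp [w, hS0, adjoint_id]
  have hw : HasDerivWithinAt w Ah (Ioi 0) 0 := by
    rw [hasDerivWithinAt_iff_tendsto_slope' self_notMem_Ioi]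
    refine hAh.congr fun t => ?_
    rw [slope_def_module, sub_zero, hw0]
  have hc := (hasDerivWithinAt_inner_QtOp hS0 (hQint h) hw.continuousWithinAt).mono
    Ioi_subset_Ici_self
  refine (((((hasDerivWithinAt_const 0 _ x).inner ℝ hw).ofReal_comp.const_mul
    Complex.I).sub (hc.ofReal_comp.div_const 2)).cexp.congr
      (fun t ht => hOU.rou_cexp_inner (le_of_lt ht) h x)
      (hOU.rou_cexp_inner le_rfl h x)).congr_deriv ?_
  simp [hw0, QtOp, real_inner_comm]
  ring

theorem IsOUSetup.tendsto_rou_cexp_inner_sub_div (hOU : IsOUSetup S Q N) {h Ah : E}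
    (hAh : Tendsto (fun t : ℝ => t⁻¹ • (adjoint (S t) h - h)) (𝓝[>] 0) (𝓝 Ah)) (x : E) :
    Tendsto (fun t : ℝ =>
        (ROU S N t (fun y => Complex.exp (Complex.I * (⟪y, h⟫ : ℂ))) x -
          Complex.exp (Complex.I * (⟪x, h⟫ : ℂ))) / (t : ℂ))
      (𝓝[>] 0)
      (𝓝 ((-(⟪Q h, h⟫ : ℂ) / 2 + Complex.I * (⟪Ah, x⟫ : ℂ)) *
        Complex.exp (Complex.I * (⟪x, h⟫ : ℂ)))) := by
  have hROU0 : ROU S N 0 (fun y => Complex.exp (Complex.I * (⟪y, h⟫ : ℂ))) x =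
      Complex.exp (Complex.I * (⟪x, h⟫ : ℂ)) := by
    simp [hOU.rou_cexp_inner le_rfl, hOU.1, adjoint_id, QtOp]
  refine ((hasDerivWithinAt_iff_tendsto_slope' self_notMem_Ioi).1
    (hOU.hasDerivWithinAt_rou_cexp_inner hAh x)).congr fun t => ?_
  rw [slope_def_module, sub_zero, hROU0, Complex.real_smul, Complex.ofReal_inv, inv_mul_eq_div]

end

theorem MemDomL.bounded_of_tendsto {E : Type*} [NormedAddCommGroup E] [InnerProductSpace ℝ E]
    [MeasurableSpace E] {S : ℝ → E →L[ℝ] E} {N : ℝ → Measure E} {φ g G : E → ℂ}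
    (hφ : MemDomL S N φ g)
    (hG : ∀ x, Tendsto (fun t : ℝ => (ROU S N t φ x - φ x) / (t : ℂ)) (𝓝[>] 0) (𝓝 (G x))) :
    ∃ C, ∀ x, ‖G x‖ ≤ C := by
  obtain ⟨-, -, -, ⟨C, hC⟩, hg, -⟩ := hφ
  exact ⟨C, fun x => tendsto_nhds_unique (hg x) (hG x) ▸ hC x⟩

/-- for `h ∈ D(A*)` (with `A*h = Ah`), the difference quotients of the OU
semigroup on `e^{i⟪·,h⟫}` converge pointwise to
`(-(1/2)⟪Qh,h⟫ + i⟪A*h,x⟫) e^{i⟪x,h⟫}`; if `A*h ≠ 0` this limit is unbounded in `x`,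
so `e^{i⟪·,h⟫}` does not belong to the domain `D(L)` of the OU generator:
`D(L) ∩ E_A(H) = {0}`. -/
theorem exponential_not_in_ou_domain
    (S : ℝ → H →L[ℝ] H) (Q : H →L[ℝ] H) (N : ℝ → Measure H)
    (hOU : IsOUSetup S Q N)
    (h Ah : H)
    (hAh : Tendsto (fun t : ℝ => t⁻¹ • ((ContinuousLinearMap.adjoint (S t)) h - h))
      (𝓝[>] (0:ℝ)) (𝓝 Ah)) :
    (∀ x, Tendsto (fun t : ℝ =>
        (ROU S N t (fun y => Complex.exp (Complex.I * (⟪y, h⟫ : ℂ))) x -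
          Complex.exp (Complex.I * (⟪x, h⟫ : ℂ))) / (t : ℂ))
      (𝓝[>] (0:ℝ))
      (𝓝 ((-(⟪Q h, h⟫ : ℂ) / 2 + Complex.I * (⟪Ah, x⟫ : ℂ)) *
        Complex.exp (Complex.I * (⟪x, h⟫ : ℂ))))) ∧
    (Ah ≠ 0 → ¬ ∃ C, ∀ x, ‖(-(⟪Q h, h⟫ : ℂ) / 2 + Complex.I * (⟪Ah, x⟫ : ℂ)) *
        Complex.exp (Complex.I * (⟪x, h⟫ : ℂ))‖ ≤ C) ∧
    (Ah ≠ 0 → ¬ ∃ g : H → ℂ,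
      MemDomL S N (fun y => Complex.exp (Complex.I * (⟪y, h⟫ : ℂ))) g) := by
  have hlim := hOU.tendsto_rou_cexp_inner_sub_div hAh
  refine ⟨hlim, fun hA => not_bounded_add_I_mul_inner_mul_exp _ hA _, ?_⟩
  rintro hA ⟨g, hg⟩
  exact not_bounded_add_I_mul_inner_mul_exp _ hA _ (hg.bounded_of_tendsto hlim)
end

section
/- Assume F ∈ C_b²(H;H) and let {P_t} be the transition semigroup of dX = (AX + F(X))dt + Q^{1/2}dW with generator K. For λ > ω + M‖DF‖_∞, the resolvent R(λ,K) maps C_b¹(H) into C_b¹(H) and ‖D R(λ,K)f‖_{C_b(H;H)} ≤ M‖Df‖_{C_b(H;H)} / (λ − ω − M‖DF‖_{C_b(H;L(H))}) for all f ∈ C_b¹(H). -/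
/-! The resolvent is differentiated under the integral sign. For `t > 0` the gradient of
`P_t f` is bounded by `M e^{(ω + Mκ)t} ‖Df‖_∞`, which is integrable against `e^{-λt}` on
`(0, ∞)` precisely because `λ > ω + Mκ`, with integral `M ‖Df‖_∞ / (λ - ω - Mκ)`; dominated
convergence then shows that `x ↦ ∫ e^{-λt} D P_t f(x) dt` is the derivative of `R(λ,K) f` and
is uniformly continuous.

The delicate point is the measurability of `t ↦ D P_t f(x)` as a map into the dual `H'`. Its
values on each vector are limits of difference quotients of the measurable maps
`t ↦ P_t f(y)`, and since `H' ≅ H` is separable, such weak-* measurable maps are measurable. -/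

open MeasureTheory Filter Topology

variable {H : Type*} [NormedAddCommGroup H] [InnerProductSpace ℝ H] [CompleteSpace H]
  [TopologicalSpace.SeparableSpace H] [MeasurableSpace H] [BorelSpace H]

/-- `φ ∈ C_b¹(H)`: Fréchet differentiable with bounded, uniformly continuous
derivative. -/
def MemCb1 (φ : H → ℝ) : Prop :=
  Differentiable ℝ φ ∧ UniformContinuous (fun x => fderiv ℝ φ x) ∧
  ∃ C, ∀ x, ‖fderiv ℝ φ x‖ ≤ C

open Set Metric

theorem measurable_of_measurableSet_preimage_closedBall {α X : Type*} [MeasurableSpace α]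
    [PseudoMetricSpace X] [SecondCountableTopology X] [MeasurableSpace X] [BorelSpace X]
    {f : α → X} (hf : ∀ c r, MeasurableSet (f ⁻¹' closedBall c r)) : Measurable f := by
  refine measurable_of_isOpen fun U hU => ?_
  choose r hr0 hrU using fun x : U => nhds_basis_closedBall.mem_iff.1 (hU.mem_nhds x.2)
  obtain ⟨T, hT, hTU⟩ := TopologicalSpace.isOpen_iUnion_countable
    (fun x : U => ball (x : X) (r x)) fun _ => isOpen_ball
  have hU_eq : U = ⋃ x ∈ T, closedBall (x : X) (r x) := by
    refine subset_antisymm (fun y hy => ?_) (iUnion₂_subset fun x _ => hrU x)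
    have hy' : y ∈ ⋃ x : U, ball (x : X) (r x) := mem_iUnion.2 ⟨⟨y, hy⟩, mem_ball_self (hr0 _)⟩
    rw [← hTU, mem_iUnion₂] at hy'
    obtain ⟨x, hxT, hyx⟩ := hy'
    exact mem_iUnion₂.2 ⟨x, hxT, ball_subset_closedBall hyx⟩
  rw [hU_eq, preimage_iUnion₂]
  exact MeasurableSet.biUnion hT fun x _ => hf _ _

theorem ContinuousLinearMap.measurable_of_measurable_apply {α E F : Type*} [MeasurableSpace α]
    [NormedAddCommGroup E] [NormedSpace ℝ E] [TopologicalSpace.SeparableSpace E]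
    [NormedAddCommGroup F] [NormedSpace ℝ F] [MeasurableSpace F] [BorelSpace F]
    [SecondCountableTopology (E →L[ℝ] F)] [MeasurableSpace (E →L[ℝ] F)]
    [BorelSpace (E →L[ℝ] F)] {φ : α → E →L[ℝ] F} (hφ : ∀ v, Measurable fun a => φ a v) :
    Measurable φ := by
  refine measurable_of_measurableSet_preimage_closedBall fun c r => ?_
  rcases lt_or_ge r 0 with hr | hr
  · simp [closedBall_eq_empty.2 hr]
  set u := TopologicalSpace.denseSeq E
  have h_eq : φ ⁻¹' closedBall c r = ⋂ n, {a | ‖φ a (u n) - c (u n)‖ ≤ r * ‖u n‖} := by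
    ext a
    simp only [mem_preimage, mem_closedBall, dist_eq_norm, mem_iInter, mem_ofPred_eq,
      ← _root_.sub_apply]
    refine ⟨fun h n => (le_opNorm _ _).trans (by gcongr), fun h => opNorm_le_bound _ hr
      fun v => (TopologicalSpace.denseRange_denseSeq E).induction_on v
        (isClosed_le (by fun_prop) (by fun_prop)) h⟩
  rw [h_eq]
  exact MeasurableSet.iInter fun n => measurableSet_le ((hφ _).sub_const _).norm measurable_const

theorem aestronglyMeasurable_fderiv_of_aemeasurable {α E F : Type*} [MeasurableSpace α]
    {μ : Measure α} [NormedAddCommGroup E] [NormedSpace ℝ E] [TopologicalSpace.SeparableSpace E]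
    [NormedAddCommGroup F] [NormedSpace ℝ F] [MeasurableSpace F] [BorelSpace F]
    [SecondCountableTopology F] [SecondCountableTopology (E →L[ℝ] F)]
    {φ : α → E → F} {x : E} (hφ : ∀ y, AEMeasurable (fun a => φ a y) μ)
    (hd : ∀ᵐ a ∂μ, DifferentiableAt ℝ (φ a) x) :
    AEStronglyMeasurable (fun a => fderiv ℝ (φ a) x) μ := by
  borelize (E →L[ℝ] F)
  have h_apply (v : E) : NullMeasurable (fun a => fderiv ℝ (φ a) x v) μ := by
    refine (aemeasurable_of_tendsto_metrizable_ae'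
      (f := fun (n : ℕ) a => (n : ℝ) • (φ a (x + (n : ℝ)⁻¹ • v) - φ a x))
      (fun n => ((hφ _).sub (hφ x)).const_smul (n : ℝ)) ?_).nullMeasurable
    filter_upwards [hd] with a ha
    exact ha.hasFDerivAt.lim v (by simpa using tendsto_natCast_atTop_atTop)
  -- On the completion `NullMeasurableSpace α μ`, null-measurable maps are measurable.
  have h : NullMeasurable (fun a => fderiv ℝ (φ a) x) μ :=
    ContinuousLinearMap.measurable_of_measurable_apply (α := NullMeasurableSpace α μ) h_apply
  exact h.aemeasurable.aestronglyMeasurable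

theorem uniformContinuous_integral_of_dominated {α X F : Type*} [MeasurableSpace α]
    {μ : Measure α} [UniformSpace X] [(uniformity X).IsCountablyGenerated]
    [NormedAddCommGroup F] [NormedSpace ℝ F] {G : X → α → F} {bound : α → ℝ}
    (hG_meas : ∀ x, AEStronglyMeasurable (G x) μ) (h_bound : ∀ x, ∀ᵐ a ∂μ, ‖G x a‖ ≤ bound a)
    (bound_integrable : Integrable bound μ) (h_uc : ∀ᵐ a ∂μ, UniformContinuous fun x => G x a) :
    UniformContinuous fun x => ∫ a, G x a ∂μ := by
  have hG_int (x : X) : Integrable (G x) μ := bound_integrable.mono' (hG_meas x) (h_bound x)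
  rw [UniformContinuous, Metric.uniformity_eq_comap_nhds_zero, tendsto_comap_iff]
  have h_lim : Tendsto (fun p : X × X => ∫ a, ‖G p.1 a - G p.2 a‖ ∂μ) (uniformity X) (𝓝 0) := by
    rw [← integral_zero α ℝ]
    refine tendsto_integral_filter_of_dominated_convergence (fun a => 2 * bound a)
      (Eventually.of_forall fun p => ((hG_meas p.1).sub (hG_meas p.2)).norm)
      (Eventually.of_forall fun p => ?_) (bound_integrable.const_mul 2) ?_
    · filter_upwards [h_bound p.1, h_bound p.2] with a h₁ h₂
      rw [norm_norm, two_mul]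
      exact (norm_sub_le _ _).trans (add_le_add h₁ h₂)
    · filter_upwards [h_uc] with a ha
      rw [UniformContinuous, Metric.uniformity_eq_comap_nhds_zero, tendsto_comap_iff] at ha
      simpa [Function.comp_def, dist_eq_norm] using ha
  refine squeeze_zero (fun _ => dist_nonneg) (fun p => ?_) h_lim
  rw [Function.comp_apply, dist_eq_norm, ← integral_sub (hG_int p.1) (hG_int p.2)]
  exact norm_integral_le_integral_norm _

theorem stronglyMeasurable_Pt {X : Type*} [MeasurableSpace X] {π : ℝ → X → Measure X}
    (hπ : ∀ s, MeasurableSet s → Measurable fun p : ℝ × X => π p.1 p.2 s)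
    {φ : X → ℝ} (hφ : StronglyMeasurable φ) (x : X) :
    StronglyMeasurable fun t => Pt π t φ x :=
  hφ.integral_kernel (κ := ⟨fun t => π t x, Measure.measurable_of_measurable_coe _
    fun s hs => (hπ s hs).comp (measurable_id.prodMk measurable_const)⟩)

theorem abs_Pt_le {X : Type*} [MeasurableSpace X] {π : ℝ → X → Measure X} {t : ℝ} {x : X}
    [IsProbabilityMeasure (π t x)] {φ : X → ℝ} {C : ℝ} (hφ : ∀ y, |φ y| ≤ C) :
    |Pt π t φ x| ≤ C := by
  simpa [Pt] using norm_integral_le_of_norm_le_const (μ := π t x) (f := φ) (Eventually.of_forall hφ)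

section Laplace

variable {lam β K : ℝ}

theorem exp_neg_mul_mul_exp_mul (t : ℝ) :
    Real.exp (-lam * t) * (K * Real.exp (β * t)) = K * Real.exp ((β - lam) * t) := by
  rw [mul_left_comm, ← Real.exp_add]
  ring_nf

theorem integrableOn_exp_neg_mul_mul_exp_mul (hβ : β < lam) :
    IntegrableOn (fun t => Real.exp (-lam * t) * (K * Real.exp (β * t))) (Ioi 0) := by
  simp_rw [exp_neg_mul_mul_exp_mul]
  exact (integrableOn_exp_mul_Ioi (by linarith) 0).const_mul K

theorem integral_exp_neg_mul_mul_exp_mul (hβ : β < lam) :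
    ∫ t in Ioi 0, Real.exp (-lam * t) * (K * Real.exp (β * t)) = K / (lam - β) := by
  simp_rw [exp_neg_mul_mul_exp_mul]
  rw [integral_const_mul, integral_exp_mul_Ioi (by linarith), mul_zero, Real.exp_zero,
    ← neg_sub, div_neg, neg_div, neg_neg, mul_one_div]

variable {F : Type*} [NormedAddCommGroup F] [NormedSpace ℝ F]

theorem norm_integral_exp_smul_le (hβ : β < lam) {G : ℝ → F}
    (hG : ∀ t > 0, ‖G t‖ ≤ K * Real.exp (β * t)) :
    ‖∫ t in Ioi 0, Real.exp (-lam * t) • G t‖ ≤ K / (lam - β) := by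
  rw [← integral_exp_neg_mul_mul_exp_mul hβ]
  refine norm_integral_le_of_norm_le (integrableOn_exp_neg_mul_mul_exp_mul (K := K) hβ)
    (ae_restrict_of_forall_mem measurableSet_Ioi fun t ht => ?_)
  rw [norm_smul, Real.norm_of_nonneg (Real.exp_pos _).le]
  exact mul_le_mul_of_nonneg_left (hG t ht) (Real.exp_pos _).le

theorem uniformContinuous_integral_exp_smul {X : Type*} [UniformSpace X]
    [(uniformity X).IsCountablyGenerated] (hβ : β < lam) {G : ℝ → X → F}
    (hG_meas : ∀ x, AEStronglyMeasurable (fun t => G t x) (volume.restrict (Ioi 0)))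
    (hG_le : ∀ t > 0, ∀ x, ‖G t x‖ ≤ K * Real.exp (β * t))
    (hG_uc : ∀ t > 0, UniformContinuous (G t)) :
    UniformContinuous fun x => ∫ t in Ioi 0, Real.exp (-lam * t) • G t x := by
  refine uniformContinuous_integral_of_dominated
    (fun x => (Continuous.aestronglyMeasurable (by fun_prop)).smul (hG_meas x))
    (fun x => ae_restrict_of_forall_mem measurableSet_Ioi fun t ht => ?_)
    (integrableOn_exp_neg_mul_mul_exp_mul (K := K) hβ)
    (ae_restrict_of_forall_mem measurableSet_Ioi fun t ht => (hG_uc t ht).const_smul _)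
  rw [norm_smul, Real.norm_of_nonneg (Real.exp_pos _).le]
  exact mul_le_mul_of_nonneg_left (hG_le t ht x) (Real.exp_pos _).le

theorem hasFDerivAt_integral_exp_mul {E : Type*} [NormedAddCommGroup E] [NormedSpace ℝ E]
    {φ : ℝ → E → ℝ} {B : ℝ} (hlam : 0 < lam) (hβ : β < lam)
    (hφ_meas : ∀ x, AEStronglyMeasurable (fun t => φ t x) (volume.restrict (Ioi 0)))
    (hφ_bdd : ∀ t x, |φ t x| ≤ B) (hφ_diff : ∀ t > 0, Differentiable ℝ (φ t))
    (hφ'_meas : ∀ x, AEStronglyMeasurable (fun t => fderiv ℝ (φ t) x) (volume.restrict (Ioi 0)))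
    (hφ'_le : ∀ t > 0, ∀ x, ‖fderiv ℝ (φ t) x‖ ≤ K * Real.exp (β * t)) (x : E) :
    HasFDerivAt (fun y => ∫ t in Ioi 0, Real.exp (-lam * t) * φ t y)
      (∫ t in Ioi 0, Real.exp (-lam * t) • fderiv ℝ (φ t) x) x := by
  have h_exp : AEStronglyMeasurable (fun t => Real.exp (-lam * t)) (volume.restrict (Ioi 0)) :=
    Continuous.aestronglyMeasurable (by fun_prop)
  refine hasFDerivAt_integral_of_dominated_of_fderiv_le Filter.univ_mem
    (Eventually.of_forall fun y => h_exp.mul (hφ_meas y)) ?_ (h_exp.smul (hφ'_meas x))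
    (ae_restrict_of_forall_mem measurableSet_Ioi fun t ht y _ => ?_)
    (integrableOn_exp_neg_mul_mul_exp_mul (K := K) hβ)
    (ae_restrict_of_forall_mem measurableSet_Ioi fun t ht y _ =>
      ((hφ_diff t ht y).hasFDerivAt.const_mul _))
  · refine ((exp_neg_integrableOn_Ioi 0 hlam).mul_const B).mono' (h_exp.mul (hφ_meas x))
      (Eventually.of_forall fun t => ?_)
    rw [Pi.mul_apply, norm_mul, Real.norm_of_nonneg (Real.exp_pos _).le]
    exact mul_le_mul_of_nonneg_left (hφ_bdd t x) (Real.exp_pos _).le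
  · rw [norm_smul, Real.norm_of_nonneg (Real.exp_pos _).le]
    exact mul_le_mul_of_nonneg_left (hφ'_le t ht y) (Real.exp_pos _).le

end Laplace

instance InnerProductSpace.secondCountableTopology_strongDual {E : Type*} [NormedAddCommGroup E]
    [InnerProductSpace ℝ E] [CompleteSpace E] [TopologicalSpace.SeparableSpace E] :
    SecondCountableTopology (E →L[ℝ] ℝ) :=
  (InnerProductSpace.toDual ℝ E).toHomeomorph.symm.secondCountableTopology

theorem resolvent_gradient_estimate_general
    (π : ℝ → H → Measure H) (hMarkov : IsMarkovSemigroup π)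
    (M ω₀ κ : ℝ)
    (hGrad : ∀ (f : H → ℝ), UniformContinuous f → (∃ C, ∀ x, |f x| ≤ C) → MemCb1 f →
      ∀ t : ℝ, 0 ≤ t → MemCb1 (fun x => Pt π t f x) ∧
        ∀ C : ℝ, (∀ x, ‖fderiv ℝ f x‖ ≤ C) →
          ∀ x, ‖fderiv ℝ (fun y => Pt π t f y) x‖ ≤ M * Real.exp ((ω₀ + M * κ) * t) * C)
    (lam : ℝ) (hlam0 : 0 < lam) (hlam : ω₀ + M * κ < lam)
    (f : H → ℝ) (hfU : UniformContinuous f) (hfb : ∃ C, ∀ x, |f x| ≤ C)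
    (hf1 : MemCb1 f) :
    MemCb1 (fun x => ∫ t in Set.Ioi (0:ℝ), Real.exp (-lam * t) * Pt π t f x) ∧
    ∀ C : ℝ, (∀ x, ‖fderiv ℝ f x‖ ≤ C) →
      ∀ x, ‖fderiv ℝ (fun y => ∫ t in Set.Ioi (0:ℝ),
          Real.exp (-lam * t) * Pt π t f y) x‖ ≤
        M * C / (lam - (ω₀ + M * κ)) := by
  obtain ⟨B, hB⟩ := hfb
  obtain ⟨C₀, hC₀⟩ := hf1.2.2
  have hPt (t : ℝ) (ht : 0 < t) := hGrad f hfU ⟨B, hB⟩ hf1 t ht.le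
  have hPt_meas (x : H) : AEStronglyMeasurable (fun t => Pt π t f x) (volume.restrict (Ioi 0)) :=
    (stronglyMeasurable_Pt hMarkov.2.1 hf1.1.continuous.stronglyMeasurable x).aestronglyMeasurable
  have hPt_bdd (t : ℝ) (x : H) : |Pt π t f x| ≤ B :=
    haveI := hMarkov.1 t x
    abs_Pt_le hB
  have hDPt_meas (x : H) :
      AEStronglyMeasurable (fun t => fderiv ℝ (Pt π t f) x) (volume.restrict (Ioi 0)) :=
    aestronglyMeasurable_fderiv_of_aemeasurable (fun y => (hPt_meas y).aemeasurable)
      (ae_restrict_of_forall_mem measurableSet_Ioi fun t ht => (hPt t ht).1.1 x)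
  have hDPt_le {C : ℝ} (hC : ∀ x, ‖fderiv ℝ f x‖ ≤ C) (t : ℝ) (ht : 0 < t) (x : H) :
      ‖fderiv ℝ (Pt π t f) x‖ ≤ M * C * Real.exp ((ω₀ + M * κ) * t) :=
    ((hPt t ht).2 C hC x).trans_eq (by ring)
  have hR (x : H) := hasFDerivAt_integral_exp_mul hlam0 hlam hPt_meas hPt_bdd
    (fun t ht => (hPt t ht).1.1) hDPt_meas (hDPt_le hC₀) x
  have hDR : fderiv ℝ (fun x => ∫ t in Ioi 0, Real.exp (-lam * t) * Pt π t f x) =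
      fun x => ∫ t in Ioi 0, Real.exp (-lam * t) • fderiv ℝ (Pt π t f) x :=
    funext fun x => (hR x).fderiv
  refine ⟨⟨fun x => (hR x).differentiableAt, ?_, M * C₀ / (lam - (ω₀ + M * κ)), fun x => ?_⟩,
    fun C hC x => ?_⟩ <;> rw [hDR]
  · exact uniformContinuous_integral_exp_smul hlam hDPt_meas (hDPt_le hC₀)
      fun t ht => (hPt t ht).1.2.1
  · exact norm_integral_exp_smul_le hlam fun t ht => hDPt_le hC₀ t ht x
  · exact norm_integral_exp_smul_le hlam fun t ht => hDPt_le hC t ht x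

/-- for the transition semigroup of `dX = (AX + F(X))dt + Q^{1/2}dW` with
`F ∈ C_b²(H;H)`, `‖e^{tA}‖ ≤ M e^{ωt}` and `κ = ‖DF‖_∞`, the gradient estimate
`‖D P_t f‖_∞ ≤ M e^{(ω + Mκ)t} ‖Df‖_∞` yields that for `λ > ω + M κ` (and `λ > 0`)
the resolvent `R(λ,K) f(x) = ∫_0^∞ e^{-λ t} P_t f(x) dt` maps `C_b¹(H)` into `C_b¹(H)`
with `‖D R(λ,K) f‖_∞ ≤ M ‖Df‖_∞ / (λ - (ω + M κ))`. -/
theorem resolvent_gradient_estimate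
    (π : ℝ → H → Measure H) (hMarkov : IsMarkovSemigroup π)
    (M ω₀ κ : ℝ) (hM : 1 ≤ M) (hκ : 0 ≤ κ)
    (hGrad : ∀ (f : H → ℝ), UniformContinuous f → (∃ C, ∀ x, |f x| ≤ C) → MemCb1 f →
      ∀ t : ℝ, 0 ≤ t → MemCb1 (fun x => Pt π t f x) ∧
        ∀ C : ℝ, (∀ x, ‖fderiv ℝ f x‖ ≤ C) →
          ∀ x, ‖fderiv ℝ (fun y => Pt π t f y) x‖ ≤ M * Real.exp ((ω₀ + M * κ) * t) * C)
    (lam : ℝ) (hlam0 : 0 < lam) (hlam : ω₀ + M * κ < lam)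
    (f : H → ℝ) (hfU : UniformContinuous f) (hfb : ∃ C, ∀ x, |f x| ≤ C)
    (hf1 : MemCb1 f) :
    MemCb1 (fun x => ∫ t in Set.Ioi (0:ℝ), Real.exp (-lam * t) * Pt π t f x) ∧
    ∀ C : ℝ, (∀ x, ‖fderiv ℝ f x‖ ≤ C) →
      ∀ x, ‖fderiv ℝ (fun y => ∫ t in Set.Ioi (0:ℝ),
          Real.exp (-lam * t) * Pt π t f y) x‖ ≤
        M * C / (lam - (ω₀ + M * κ)) :=
  resolvent_gradient_estimate_general π hMarkov M ω₀ κ hGrad lam hlam0 hlam f hfU hfb hf1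
end
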